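/- arXiv:2009.07131 — 2 statements merged into one kernel-verified Lean document; each statement's English description precedes it below -/
import Mathlib

section
/- For every x ∈ ℝ², μ ∈ ℝ, and t ∈ ℝ with |t| ≥ |μ|, one has ∫_0^{2π} exp(−μ x·θ⊥(φ) + i t x·θ(φ)) dφ = 2π J₀(‖x‖ √(t² − μ²)). -/
open MeasureTheory Real Filter

noncomputable section

/-- The Euclidean plane. -/
abbrev R2 := EuclideanSpace ℝ (Fin 2)

/-- The unit vector `θ(φ) = (cos φ, sin φ)`. -/
def theta (φ : ℝ) : R2 := (WithLp.equiv 2 _).symm ![Real.cos φ, Real.sin φ]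

/-- The perpendicular unit vector `θ⊥(φ) = (-sin φ, cos φ)`. -/
def thetaPerp (φ : ℝ) : R2 := (WithLp.equiv 2 _).symm ![-Real.sin φ, Real.cos φ]

/-- The Euclidean dot product on `ℝ²`. -/
def dot (x y : R2) : ℝ := inner ℝ x y

/-- The Bessel function of the first kind of order `0`,
`J₀(r) = (1/(2π)) ∫_0^{2π} e^{i r sin φ} dφ` (complex-valued integral). -/
def J0 (r : ℝ) : ℂ :=
  (1 / (2 * π) : ℝ) * ∫ φ in (0:ℝ)..(2 * π), Complex.exp (Complex.I * (r * Real.sin φ : ℝ))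

/-! Expanding `exp` in its power series and integrating term by term, only the constant Fourier
modes survive, so `∫₀^{2π} exp(p e^{iφ} + q e^{-iφ}) dφ = 2π ∑ₖ (pq)ᵏ / (k!)²` depends on `p` and
`q` only through `pq`. Writing `z = x₀ + i x₁`, the exponent on the left is of this form with
`p = i(t - μ) z̄ / 2`, `q = i(t + μ) z / 2`, so `pq = -(t² - μ²)|z|² / 4`, while the integrand of
`2π J₀(r)` is `exp((r/2) e^{iφ} - (r/2) e^{-iφ})`, with product `-r² / 4`. -/

open scoped Complex
open Complex (I)

theorem cexp_I_mul_ofReal (φ : ℝ) : cexp (I * φ) = Complex.cos φ + Complex.sin φ * I := by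
  rw [mul_comm, Complex.exp_mul_I]

theorem cexp_neg_I_mul_ofReal (φ : ℝ) : cexp (-(I * φ)) = Complex.cos φ - Complex.sin φ * I := by
  rw [← mul_neg, ← Complex.ofReal_neg, cexp_I_mul_ofReal, Complex.ofReal_neg, Complex.cos_neg,
    Complex.sin_neg, neg_mul, sub_eq_add_neg]

theorem integral_exp_int_mul_I (k : ℤ) :
    ∫ φ in (0:ℝ)..2 * π, cexp (k * I * φ) = if k = 0 then ((2 * π : ℝ) : ℂ) else 0 := by
  split_ifs with hk
  · simp [hk]
  · have hkI : (k : ℂ) * I ≠ 0 := mul_ne_zero (Int.cast_ne_zero.2 hk) Complex.I_ne_zero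
    have hperiod : (k : ℂ) * I * ((2 * π : ℝ) : ℂ) = k * (2 * π * I) := by push_cast; ring
    rw [integral_exp_mul_complex hkI, hperiod, Complex.exp_int_mul_two_pi_mul_I]
    simp

theorem integral_mul_exp_add_mul_exp_pow (p q : ℂ) (n : ℕ) :
    ∫ φ in (0:ℝ)..2 * π, (p * cexp (I * φ) + q * cexp (-(I * φ))) ^ n =
      if Even n then ((2 * π : ℝ) : ℂ) * n.choose (n / 2) * (p * q) ^ (n / 2) else 0 := by
  have binomial (φ : ℝ) : (p * cexp (I * φ) + q * cexp (-(I * φ))) ^ n =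
      ∑ j ∈ Finset.range (n + 1),
        p ^ j * q ^ (n - j) * n.choose j * cexp (((2 * j - n : ℤ) : ℂ) * I * φ) := by
    rw [add_pow]
    refine Finset.sum_congr rfl fun j hj => ?_
    have hexp : cexp (I * φ) ^ j * cexp (-(I * φ)) ^ (n - j) =
        cexp (((2 * j - n : ℤ) : ℂ) * I * φ) := by
      rw [← Complex.exp_nat_mul, ← Complex.exp_nat_mul, ← Complex.exp_add,
        Nat.cast_sub (Finset.mem_range_succ_iff.1 hj)]
      push_cast
      ring_nf
    rw [mul_pow, mul_pow, mul_mul_mul_comm, hexp]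
    ring
  simp_rw [binomial]
  rw [intervalIntegral.integral_finsetSum fun j _ => by
    apply Continuous.intervalIntegrable; fun_prop]
  simp_rw [intervalIntegral.integral_const_mul, integral_exp_int_mul_I]
  rw [Finset.sum_eq_single (n / 2)]
  · rcases Nat.even_or_odd' n with ⟨k, rfl | rfl⟩
    · have hk : 2 * k / 2 = k := by omega
      have hk' : 2 * k - k = k := by omega
      simp only [hk, hk', Nat.cast_mul, Nat.cast_ofNat, sub_self, ↓reduceIte, Complex.ofReal_mul,
        Complex.ofReal_ofNat, even_two, Even.mul_right, mul_pow]
      ring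
    · have hk : (2 * k + 1) / 2 = k := by omega
      rw [hk, if_neg (by push_cast; omega), if_neg (by simp), mul_zero]
  · intro j _ hj
    rw [if_neg (by omega), mul_zero]
  · intro h
    exact absurd (Finset.mem_range.2 (by omega)) h

theorem integral_exp_eq_tsum_integral_pow (g : C(ℝ, ℂ)) (a b : ℝ) :
    ∫ x in a..b, cexp (g x) = ∑' n : ℕ, (∫ x in a..b, g x ^ n) / n.factorial := by
  let K : TopologicalSpace.Compacts ℝ := ⟨Set.uIcc a b, isCompact_uIcc⟩
  let term (n : ℕ) : C(ℝ, ℂ) := ⟨fun x => g x ^ n / n.factorial, by fun_prop⟩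
  have hbound (n : ℕ) : ‖(term n).restrict K‖ ≤ ‖g.restrict K‖ ^ n / n.factorial := by
    refine (ContinuousMap.norm_le _ (by positivity)).2 fun x => ?_
    simp only [ContinuousMap.restrict_apply, term, ContinuousMap.coe_mk, norm_div, norm_pow,
      Complex.norm_natCast]
    gcongr
    exact (g.restrict K).norm_coe_le_norm x
  have hsum : Summable fun n => ‖(term n).restrict K‖ :=
    .of_nonneg_of_le (fun _ => norm_nonneg _) hbound (Real.summable_pow_div_factorial _)
  calc ∫ x in a..b, cexp (g x) = ∫ x in a..b, ∑' n, term n x := by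
        simp [term, Complex.exp_eq_exp_ℂ, NormedSpace.exp_eq_tsum_div]
    _ = ∑' n, ∫ x in a..b, term n x :=
        (intervalIntegral.tsum_intervalIntegral_eq_of_summable_norm hsum).symm
    _ = _ := by simp [term, intervalIntegral.integral_div]

theorem integral_exp_mul_exp_add_mul_exp_of_mul_eq {p q p' q' : ℂ} (h : p * q = p' * q') :
    ∫ φ in (0:ℝ)..2 * π, cexp (p * cexp (I * φ) + q * cexp (-(I * φ))) =
      ∫ φ in (0:ℝ)..2 * π, cexp (p' * cexp (I * φ) + q' * cexp (-(I * φ))) := by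
  have series (p q : ℂ) := integral_exp_eq_tsum_integral_pow
    ⟨fun φ : ℝ => p * cexp (I * φ) + q * cexp (-(I * φ)), by fun_prop⟩ 0 (2 * π)
  simp only [ContinuousMap.coe_mk] at series
  simp_rw [series, integral_mul_exp_add_mul_exp_pow, h]

theorem dot_theta (x : R2) (φ : ℝ) : dot x (theta φ) = x 0 * Real.cos φ + x 1 * Real.sin φ := by
  simp only [dot, theta, WithLp.equiv_symm_apply, PiLp.inner_apply, RCLike.inner_apply,
    ringHom_apply, Fin.sum_univ_two, Matrix.cons_val_zero, Matrix.cons_val_one]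
  ring

theorem dot_thetaPerp (x : R2) (φ : ℝ) :
    dot x (thetaPerp φ) = x 1 * Real.cos φ - x 0 * Real.sin φ := by
  simp only [dot, thetaPerp, WithLp.equiv_symm_apply, PiLp.inner_apply, RCLike.inner_apply,
    ringHom_apply, Fin.sum_univ_two, Matrix.cons_val_zero, Matrix.cons_val_one]
  ring

theorem neg_mul_dot_thetaPerp_add_I_mul_dot_theta (x : R2) (μ t φ : ℝ) :
    ((-(μ * dot x (thetaPerp φ)) : ℝ) : ℂ) + I * (t * dot x (theta φ) : ℝ) =
      I * (t - μ) / 2 * (x 0 - I * x 1) * cexp (I * φ) +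
        I * (t + μ) / 2 * (x 0 + I * x 1) * cexp (-(I * φ)) := by
  rw [cexp_I_mul_ofReal, cexp_neg_I_mul_ofReal]
  push_cast [dot_theta, dot_thetaPerp]
  linear_combination (μ * x 0 * Complex.sin φ - μ * x 1 * Complex.cos φ +
    I * t * x 1 * Complex.sin φ) * Complex.I_sq

theorem two_pi_mul_J0 (r : ℝ) :
    ((2 * π : ℝ) : ℂ) * J0 r =
      ∫ φ in (0:ℝ)..2 * π, cexp (r / 2 * cexp (I * φ) + -(r / 2) * cexp (-(I * φ))) := by
  have hsin (φ : ℝ) : I * ((r * Real.sin φ : ℝ) : ℂ) =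
      r / 2 * cexp (I * φ) + -(r / 2) * cexp (-(I * φ)) := by
    rw [cexp_I_mul_ofReal, cexp_neg_I_mul_ofReal]
    push_cast
    ring
  rw [J0, ← mul_assoc, ← Complex.ofReal_mul, mul_one_div_cancel (by positivity),
    Complex.ofReal_one, one_mul]
  simp_rw [hsin]

/-- `∫_0^{2π} exp(-μ x·θ⊥(φ) + i t x·θ(φ)) dφ = 2π J₀(‖x‖ √(t² - μ²))`. -/
theorem circle_integral_eq_bessel (x : R2) (μ t : ℝ) (h : |μ| ≤ |t|) :
    (∫ φ in (0:ℝ)..(2 * π),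
        Complex.exp ((-(μ * dot x (thetaPerp φ)) : ℝ) + Complex.I * (t * dot x (theta φ) : ℝ)))
      = (2 * π : ℝ) * J0 (‖x‖ * Real.sqrt (t ^ 2 - μ ^ 2)) := by
  set r := ‖x‖ * Real.sqrt (t ^ 2 - μ ^ 2)
  have hr : r ^ 2 = (x 0 ^ 2 + x 1 ^ 2) * (t ^ 2 - μ ^ 2) := by
    rw [mul_pow, Real.sq_sqrt (sub_nonneg.2 (sq_le_sq.2 h)), EuclideanSpace.real_norm_sq_eq,
      Fin.sum_univ_two]
  have hprod : I * (t - μ) / 2 * (x 0 - I * x 1) * (I * (t + μ) / 2 * (x 0 + I * x 1)) =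
      r / 2 * -(r / 2) := by
    have hr' : (r : ℂ) ^ 2 = (x 0 ^ 2 + x 1 ^ 2) * (t ^ 2 - μ ^ 2) := by exact_mod_cast hr
    linear_combination
      ((t ^ 2 - μ ^ 2) * (x 0 ^ 2 + (1 - I ^ 2) * x 1 ^ 2) / 4 : ℂ) * Complex.I_sq + hr' / 4
  rw [two_pi_mul_J0, ← integral_exp_mul_exp_add_mul_exp_of_mul_eq hprod]
  simp_rw [neg_mul_dot_thetaPerp_add_I_mul_dot_theta]
end
end

section
/- For every μ ∈ ℝ there exists a constant C(μ) > 0 such that for every square-integrable f : ℝ² → ℝ vanishing outside the closed unit ball B₁, ∫_0^{2π} ∫_{−1}^{1} |T_μ f(φ, s)|² ds dφ ≤ C(μ) ∫_{ℝ²} |f(x)|² dx. -/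
open MeasureTheory Real Filter

noncomputable section

/-- The exponential Radon transform
`T_μ f(φ, s) = ∫ e^{μ t} f(s θ(φ) + t θ⊥(φ)) dt`. -/
def ERT (μ : ℝ) (f : R2 → ℝ) (φ s : ℝ) : ℝ :=
  ∫ t : ℝ, Real.exp (μ * t) * f (s • theta φ + t • thetaPerp φ)

/-!
For a fixed angle `φ`, the map `(s, t) ↦ s • θ(φ) + t • θ⊥(φ)` is a rotation of the plane, so it
preserves Lebesgue measure. Since `f` vanishes outside the unit ball, the line integral defining
`T_μ f(φ, s)` only runs over `t ∈ [-1, 1]`, where Cauchy–Schwarz bounds its square by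
`(∫_{-1}^{1} e^{2μt} dt) · ∫ f(sθ + tθ⊥)² dt ≤ 2 e^{2|μ|} ∫ f(sθ + tθ⊥)² dt`. Integrating in `s` and
applying Fubini in the rotated coordinates gives `∫_{-1}^{1} |T_μ f(φ, s)|² ds ≤ 2 e^{2|μ|} ‖f‖₂²`
for every `φ`; integrating over `φ` gives the constant `C(μ) = 4π e^{2|μ|}`.
-/

section CauchySchwarz

variable {α : Type*} [MeasurableSpace α] {ν : Measure α}

theorem sq_integral_mul_le_integral_sq_mul_integral_sq {g h : α → ℝ} (hg : MemLp g 2 ν)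
    (hh : MemLp h 2 ν) :
    (∫ a, g a * h a ∂ν) ^ 2 ≤ (∫ a, g a ^ 2 ∂ν) * ∫ a, h a ^ 2 ∂ν := by
  have inner_toLp {u v : α → ℝ} (hu : MemLp u 2 ν) (hv : MemLp v 2 ν) :
      inner ℝ (hu.toLp u) (hv.toLp v) = ∫ a, u a * v a ∂ν := by
    rw [L2.inner_def]
    refine integral_congr_ae ?_
    filter_upwards [hu.coeFn_toLp, hv.coeFn_toLp] with a hua hva
    rw [hua, hva, real_inner_eq_re_inner, RCLike.inner_apply]
    simp [mul_comm]
  simpa only [inner_toLp, sq] using real_inner_mul_inner_self_le (hg.toLp g) (hh.toLp h)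

theorem sq_integral_mul_le_of_eq_zero_off {S : Set α} {w g : α → ℝ}
    (hw : MemLp w 2 (ν.restrict S)) (hg : MemLp g 2 ν) (hgS : ∀ a ∉ S, g a = 0) :
    (∫ a, w a * g a ∂ν) ^ 2 ≤ (∫ a in S, w a ^ 2 ∂ν) * ∫ a, g a ^ 2 ∂ν := by
  have hwg : ∫ a in S, w a * g a ∂ν = ∫ a, w a * g a ∂ν :=
    setIntegral_eq_integral_of_forall_compl_eq_zero fun a ha => by simp [hgS a ha]
  rw [← hwg]
  refine (sq_integral_mul_le_integral_sq_mul_integral_sq hw (hg.restrict S)).trans ?_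
  exact mul_le_mul_of_nonneg_left
    (setIntegral_le_integral hg.integrable_sq (ae_of_all _ fun _ => sq_nonneg _))
    (integral_nonneg fun _ => sq_nonneg _)

end CauchySchwarz

section PlaneCoordinates

variable {E : Type*} [NormedAddCommGroup E] [InnerProductSpace ℝ E] [MeasurableSpace E]
  [BorelSpace E]

def OrthonormalBasis.planeCoords (b : OrthonormalBasis (Fin 2) ℝ E) : ℝ × ℝ ≃ᵐ E :=
  (MeasurableEquiv.finTwoArrow.symm.trans (MeasurableEquiv.toLp 2 (Fin 2 → ℝ))).trans
    b.repr.symm.toHomeomorph.toMeasurableEquiv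

variable (b : OrthonormalBasis (Fin 2) ℝ E)

theorem OrthonormalBasis.planeCoords_apply (p : ℝ × ℝ) :
    b.planeCoords p = p.1 • b 0 + p.2 • b 1 := by
  show b.repr.symm (WithLp.toLp 2 ![p.1, p.2]) = _
  simp [← b.sum_repr_symm, Fin.sum_univ_two]

theorem OrthonormalBasis.measurePreserving_planeCoords [FiniteDimensional ℝ E] :
    MeasurePreserving b.planeCoords volume volume :=
  (b.measurePreserving_repr_symm.comp (PiLp.volume_preserving_toLp (Fin 2))).comp
    (volume_preserving_finTwoArrow ℝ).symm

theorem OrthonormalBasis.norm_planeCoords_sq (p : ℝ × ℝ) :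
    ‖b.planeCoords p‖ ^ 2 = p.1 ^ 2 + p.2 ^ 2 := by
  show ‖b.repr.symm (WithLp.toLp 2 ![p.1, p.2])‖ ^ 2 = _
  simp [EuclideanSpace.norm_sq_eq, Fin.sum_univ_two]

end PlaneCoordinates

theorem orthonormal_theta_thetaPerp (φ : ℝ) : Orthonormal ℝ ![theta φ, thetaPerp φ] := by
  rw [orthonormal_iff_ite]
  intro i j
  fin_cases i <;> fin_cases j <;>
    simp [theta, thetaPerp, PiLp.inner_apply, Fin.sum_univ_two, EuclideanSpace.norm_eq] <;>
    nlinarith [sin_sq_add_cos_sq φ]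

def rotationBasis (φ : ℝ) : OrthonormalBasis (Fin 2) ℝ R2 :=
  (basisOfOrthonormalOfCardEqFinrank (orthonormal_theta_thetaPerp φ) (by simp)).toOrthonormalBasis
    (by rw [coe_basisOfOrthonormalOfCardEqFinrank]; exact orthonormal_theta_thetaPerp φ)

theorem coe_rotationBasis (φ : ℝ) : ⇑(rotationBasis φ) = ![theta φ, thetaPerp φ] := by
  simp [rotationBasis, Module.Basis.coe_toOrthonormalBasis, coe_basisOfOrthonormalOfCardEqFinrank]

theorem ERT_eq_integral_planeCoords (μ : ℝ) (f : R2 → ℝ) (φ s : ℝ) :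
    ERT μ f φ s = ∫ t : ℝ, exp (μ * t) * f ((rotationBasis φ).planeCoords (s, t)) := by
  simp [ERT, OrthonormalBasis.planeCoords_apply, coe_rotationBasis]

theorem setIntegral_exp_mul_sq_le (μ : ℝ) :
    ∫ t in Set.Icc (-1 : ℝ) 1, exp (μ * t) ^ 2 ≤ 2 * exp (2 * |μ|) := by
  have hbound : ∀ t ∈ Set.Icc (-1 : ℝ) 1, exp (μ * t) ^ 2 ≤ exp (2 * |μ|) := by
    intro t ht
    have ht1 : |t| ≤ 1 := abs_le.2 ht
    calc exp (μ * t) ^ 2 = exp (2 * (μ * t)) := by rw [← exp_nat_mul]; norm_num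
      _ ≤ exp (2 * |μ|) := by
        gcongr
        calc μ * t ≤ |μ| * |t| := abs_mul μ t ▸ le_abs_self _
          _ ≤ |μ| := mul_le_of_le_one_right (abs_nonneg μ) ht1
  calc ∫ t in Set.Icc (-1 : ℝ) 1, exp (μ * t) ^ 2
      ≤ ∫ _ in Set.Icc (-1 : ℝ) 1, exp (2 * |μ|) :=
        setIntegral_mono_on (by fun_prop : Continuous fun t => exp (μ * t) ^ 2).integrableOn_Icc
          (integrableOn_const (by simp)) measurableSet_Icc hbound
    _ = 2 * exp (2 * |μ|) := by norm_num [setIntegral_const, Real.volume_real_Icc]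

theorem sq_integral_exp_mul_le (μ : ℝ) {g : ℝ → ℝ} (hg : MemLp g 2 volume)
    (hg0 : ∀ t ∉ Set.Icc (-1 : ℝ) 1, g t = 0) :
    (∫ t, exp (μ * t) * g t) ^ 2 ≤ 2 * exp (2 * |μ|) * ∫ t, g t ^ 2 := by
  have hexp : Continuous fun t => exp (μ * t) := by fun_prop
  have hexp2 : MemLp (fun t => exp (μ * t)) 2 (volume.restrict (Set.Icc (-1 : ℝ) 1)) :=
    (memLp_two_iff_integrable_sq hexp.aestronglyMeasurable).2 (hexp.pow 2).integrableOn_Icc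
  exact (sq_integral_mul_le_of_eq_zero_off hexp2 hg hg0).trans
    (mul_le_mul_of_nonneg_right (setIntegral_exp_mul_sq_le μ)
      (integral_nonneg fun _ => sq_nonneg _))

theorem OrthonormalBasis.integral_sq_integral_exp_mul_le {E : Type*} [NormedAddCommGroup E]
    [InnerProductSpace ℝ E] [FiniteDimensional ℝ E] [MeasurableSpace E] [BorelSpace E]
    (μ : ℝ) (b : OrthonormalBasis (Fin 2) ℝ E) {f : E → ℝ} (hf : Measurable f)
    (hsupp : ∀ x ∉ Metric.closedBall (0 : E) 1, f x = 0) (hf2 : MemLp f 2 volume) :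
    ∫ s in (-1 : ℝ)..1, (∫ t, exp (μ * t) * f (b.planeCoords (s, t))) ^ 2 ≤
      2 * exp (2 * |μ|) * ∫ x, f x ^ 2 := by
  set K := 2 * exp (2 * |μ|)
  set G : ℝ → ℝ := fun s => ∫ t, f (b.planeCoords (s, t)) ^ 2
  have hmp := b.measurePreserving_planeCoords
  have hint : Integrable (fun p => f (b.planeCoords p) ^ 2) (volume.prod volume) :=
    (hmp.integrable_comp_emb b.planeCoords.measurableEmbedding).2 hf2.integrable_sq
  have hG : ∫ s, G s = ∫ x, f x ^ 2 := by
    rw [integral_integral hint, ← Measure.volume_eq_prod]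
    exact hmp.integral_comp' (fun x => f x ^ 2)
  have hvanish : ∀ s t, t ∉ Set.Icc (-1 : ℝ) 1 → f (b.planeCoords (s, t)) = 0 := by
    intro s t ht
    have ht2 : 1 < t ^ 2 := by
      rw [Set.mem_Icc, not_and_or, not_le, not_le] at ht
      rcases ht with ht | ht <;> nlinarith
    refine hsupp _ ?_
    rw [Metric.mem_closedBall, dist_zero_right, not_le]
    nlinarith [b.norm_planeCoords_sq (s, t), sq_nonneg s, norm_nonneg (b.planeCoords (s, t))]
  have hslice : ∀ᵐ s, (∫ t, exp (μ * t) * f (b.planeCoords (s, t))) ^ 2 ≤ K * G s := by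
    filter_upwards [hint.prod_right_ae] with s hs
    have hmeas : Measurable fun t => f (b.planeCoords (s, t)) :=
      hf.comp (b.planeCoords.measurable.comp measurable_prodMk_left)
    exact sq_integral_exp_mul_le μ
      ((memLp_two_iff_integrable_sq hmeas.aestronglyMeasurable).2 hs) (hvanish s)
  have hKG : Integrable (fun s => K * G s) := hint.integral_prod_left.const_mul K
  have hGnn : 0 ≤ G := fun s => integral_nonneg fun _ => sq_nonneg _
  rw [intervalIntegral.integral_of_le (by norm_num), ← hG, ← integral_const_mul]
  calc ∫ s in Set.Ioc (-1 : ℝ) 1, (∫ t, exp (μ * t) * f (b.planeCoords (s, t))) ^ 2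
      ≤ ∫ s in Set.Ioc (-1 : ℝ) 1, K * G s :=
        integral_mono_of_nonneg (ae_of_all _ fun _ => sq_nonneg _) hKG.restrict
          (ae_restrict_of_ae hslice)
    _ ≤ ∫ s, K * G s :=
        setIntegral_le_integral hKG (ae_of_all _ fun s => mul_nonneg (by positivity) (hGnn s))

/-- `L²` continuity of the exponential Radon transform:
`∫_0^{2π} ∫_{-1}^1 |T_μ f(φ,s)|² ds dφ ≤ C(μ) ∫_{ℝ²} |f|²`. -/
theorem ERT_L2_continuity (μ : ℝ) :
    ∃ C : ℝ, 0 < C ∧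
      ∀ f : R2 → ℝ, Measurable f →
        (∀ x : R2, x ∉ Metric.closedBall (0 : R2) 1 → f x = 0) →
        MemLp f 2 volume →
        (∫ φ in (0:ℝ)..(2 * π), ∫ s in (-1:ℝ)..1, (ERT μ f φ s) ^ 2) ≤
          C * ∫ x : R2, (f x) ^ 2 := by
  refine ⟨2 * exp (2 * |μ|) * (2 * π), by positivity, fun f hf hsupp hf2 => ?_⟩
  have hangle : ∀ φ, ‖∫ s in (-1 : ℝ)..1, ERT μ f φ s ^ 2‖ ≤ 2 * exp (2 * |μ|) * ∫ x, f x ^ 2 := by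
    intro φ
    rw [Real.norm_of_nonneg (intervalIntegral.integral_nonneg (by norm_num) fun _ _ => sq_nonneg _)]
    simpa only [ERT_eq_integral_planeCoords] using
      (rotationBasis φ).integral_sq_integral_exp_mul_le μ hf hsupp hf2
  -- The `φ`-integrand is not known to be measurable; a pointwise bound on its norm suffices.
  calc (∫ φ in (0 : ℝ)..(2 * π), ∫ s in (-1 : ℝ)..1, ERT μ f φ s ^ 2)
      ≤ ‖∫ φ in (0 : ℝ)..(2 * π), ∫ s in (-1 : ℝ)..1, ERT μ f φ s ^ 2‖ := le_norm_self _
    _ ≤ 2 * exp (2 * |μ|) * (∫ x, f x ^ 2) * |2 * π - 0| :=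
        intervalIntegral.norm_integral_le_of_norm_le_const fun φ _ => hangle φ
    _ = 2 * exp (2 * |μ|) * (2 * π) * ∫ x, f x ^ 2 := by
        rw [sub_zero, abs_of_pos two_pi_pos]; ring
end
end
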